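/- Let T be a tree on at least 3 vertices and let L be the number of leaves of T. Then there exists a set F of exactly ⌈ L/2 ⌉ edges on V(T), each joining two distinct leaves of T and none belonging to E(T), such that T + F has minimum degree at least 2. -/
import Mathlib

open SimpleGraph Set Finset

private lemma leaf_nbr_eq {V : Type*} {T : SimpleGraph V} {a b : V}
    (ha : (T.neighborSet a).ncard = 1) (hab : T.Adj a b) :
    T.neighborSet a = {b} := by
  obtain ⟨c, hc⟩ := Set.ncard_eq_one.mp ha
  have hb : b ∈ T.neighborSet a := hab
  rw [hc] at hb ⊢
  simp only [Set.mem_singleton_iff] at hb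
  subst hb; rfl

private lemma exists_nbr {V : Type*} [Fintype V] {T : SimpleGraph V} (hconn : T.Connected)
    (hn : 2 ≤ Fintype.card V) (v : V) : ∃ w, T.Adj v w := by
  obtain ⟨w, hw⟩ := Fintype.exists_ne_of_one_lt_card (by omega) v
  obtain ⟨p⟩ := hconn.preconnected v w
  cases p with
  | nil => exact absurd rfl hw.symm
  | cons h _ => exact ⟨_, h⟩

private lemma no_adj_leaves {V : Type*} [Fintype V] {T : SimpleGraph V} (hconn : T.Connected)
    (hn : 3 ≤ Fintype.card V) {a b : V}
    (ha : (T.neighborSet a).ncard = 1) (hb : (T.neighborSet b).ncard = 1) :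
    ¬ T.Adj a b := by
  intro hab
  have hNa := leaf_nbr_eq ha hab
  have hNb := leaf_nbr_eq hb hab.symm
  have key : ∀ x y : V, T.Walk x y → (x = a ∨ x = b) → (y = a ∨ y = b) := by
    intro x y w
    induction w with
    | nil => exact id
    | @cons x c y h p ih =>
      intro hx
      apply ih
      rcases hx with rfl | rfl
      · have : c ∈ T.neighborSet x := h
        rw [hNa] at this; right; exact this
      · have : c ∈ T.neighborSet x := h
        rw [hNb] at this; left; exact this
  obtain ⟨c, hca, hcb⟩ : ∃ c : V, c ≠ a ∧ c ≠ b := by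
    classical
    by_contra hcon
    push_neg at hcon
    have hsub : (Finset.univ : Finset V) ⊆ {a, b} := by
      intro x _
      rcases Classical.em (x = a) with rfl | hx
      · simp
      · simp [hcon x hx]
    have := Finset.card_le_card hsub
    have h2 : ({a, b} : Finset V).card ≤ 2 := Finset.card_insert_le _ _ |>.trans (by simp)
    simp only [Finset.card_univ] at this
    omega
  obtain ⟨p⟩ := hconn.preconnected a c
  rcases key a c p (Or.inl rfl) with h | h
  · exact hca h
  · exact hcb h

private lemma deg_eq {V : Type*} [Fintype V] (T : SimpleGraph V) [DecidableRel T.Adj] (v : V) :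
    (T.neighborSet v).ncard = T.degree v := by
  rw [Set.ncard_eq_toFinset_card', Set.toFinset_card]
  exact T.card_neighborSet_eq_degree v

private lemma two_le_leaves {V : Type*} [Fintype V] {T : SimpleGraph V} (hconn : T.Connected)
    (hac : T.IsAcyclic) (hn : 3 ≤ Fintype.card V) :
    2 ≤ {v : V | (T.neighborSet v).ncard = 1}.ncard := by
  classical
  have htree : T.IsTree := ⟨hconn, hac⟩
  have hedges : T.edgeFinset.card + 1 = Fintype.card V := htree.card_edgeFinset
  have hsum : ∑ v, T.degree v = 2 * T.edgeFinset.card := T.sum_degrees_eq_twice_card_edges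
  set s : Finset V := Finset.univ.filter (fun v => T.degree v = 1) with hs
  have h1 : ∀ v : V, 1 ≤ T.degree v := by
    intro v
    obtain ⟨w, hw⟩ := exists_nbr hconn (by omega) v
    exact (T.degree_pos_iff_exists_adj v).mpr ⟨w, hw⟩
  -- split sum
  have hsplit : ∑ v ∈ s, T.degree v + ∑ v ∈ sᶜ, T.degree v = ∑ v, T.degree v :=
    Finset.sum_add_sum_compl s _
  have hle1 : s.card * 1 ≤ ∑ v ∈ s, T.degree v := by
    rw [← smul_eq_mul]
    exact Finset.card_nsmul_le_sum s _ 1 (fun v _ => h1 v)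
  have hle2 : sᶜ.card * 2 ≤ ∑ v ∈ sᶜ, T.degree v := by
    rw [← smul_eq_mul]
    refine Finset.card_nsmul_le_sum sᶜ _ 2 (fun v hv => ?_)
    simp only [hs, Finset.mem_compl, Finset.mem_filter, Finset.mem_univ, true_and] at hv
    have := h1 v
    omega
  have hcc : s.card + sᶜ.card = Fintype.card V := by
    rw [Finset.card_add_card_compl]
  have hset : {v : V | (T.neighborSet v).ncard = 1} = ↑s := by
    ext v
    simp [hs, deg_eq]
  rw [hset, Set.ncard_coe_finset]
  omega

/-- Let `T` be a tree on at least three vertices with `L` leaves. Then there is a set `F` of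
exactly `⌈L/2⌉` edges, each joining two distinct leaves of `T` and none belonging to `E(T)`,
such that `T + F` has minimum degree at least `2`. -/
theorem tree_completion_k_two {V : Type*} [Fintype V]
    (T : SimpleGraph V) (hconn : T.Connected) (hac : T.IsAcyclic)
    (hn : 3 ≤ Fintype.card V)
    (L : ℕ) (hL : L = {v : V | (T.neighborSet v).ncard = 1}.ncard) :
    ∃ F : Set (Sym2 V),
      F.ncard = (L + 1) / 2 ∧
      (∀ e ∈ F, ∃ a b : V, e = s(a, b) ∧ a ≠ b ∧
        (T.neighborSet a).ncard = 1 ∧ (T.neighborSet b).ncard = 1) ∧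
      Disjoint F T.edgeSet ∧
      ∀ v : V, 2 ≤ ((T ⊔ SimpleGraph.fromEdgeSet F).neighborSet v).ncard := by
  classical
  set S : Set V := {v : V | (T.neighborSet v).ncard = 1} with hS
  have hL2 : 2 ≤ L := hL ▸ two_le_leaves hconn hac hn
  have hLpos : 0 < L := by omega
  have hcard : Fintype.card S = L := by
    rw [hL, Set.ncard_eq_toFinset_card', Set.toFinset_card]
  set e : Fin L ≃ S := (Fintype.equivFinOfCardEq hcard).symm with he
  set f : ℕ → V := fun n => (e ⟨n % L, Nat.mod_lt _ hLpos⟩ : V) with hf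
  have hfS : ∀ n, f n ∈ S := fun n => (e _).2
  have hfinj : ∀ m n, f m = f n → m % L = n % L := by
    intro m n h
    have := e.injective (Subtype.ext h)
    exact congrArg Fin.val this
  set edge : ℕ → Sym2 V := fun i => s(f (2*i), f (2*i+1)) with hedge
  set Ffin : Finset (Sym2 V) := (Finset.range ((L+1)/2)).image edge with hFfin
  -- basic numeric fact
  have hlt : ∀ i, i < (L+1)/2 → 2*i < L := by intro i hi; omega
  -- edge endpoints distinct
  have hne : ∀ i, i < (L+1)/2 → f (2*i) ≠ f (2*i+1) := by
    intro i hi h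
    have h2i := hlt i hi
    have hm := hfinj _ _ h
    rw [Nat.mod_eq_of_lt h2i] at hm
    rcases Nat.lt_or_ge (2*i+1) L with hc | hc
    · rw [Nat.mod_eq_of_lt hc] at hm; omega
    · have : 2*i+1 = L := by omega
      rw [this, Nat.mod_self] at hm; omega
  -- injectivity of edge on range
  have hinj : ∀ i ∈ Finset.range ((L+1)/2), ∀ j ∈ Finset.range ((L+1)/2),
      edge i = edge j → i = j := by
    intro i hi j hj h
    rw [Finset.mem_range] at hi hj
    have h2i := hlt i hi
    have h2j := hlt j hj
    rw [hedge] at h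
    simp only [Sym2.eq_iff] at h
    rcases h with ⟨h1, _⟩ | ⟨h1, h2⟩
    · have := hfinj _ _ h1
      rw [Nat.mod_eq_of_lt h2i, Nat.mod_eq_of_lt h2j] at this
      omega
    · have hm1 := hfinj _ _ h1
      have hm2 := hfinj _ _ h2
      rw [Nat.mod_eq_of_lt h2i] at hm1
      rw [Nat.mod_eq_of_lt h2j] at hm2
      rcases Nat.lt_or_ge (2*j+1) L with hc | hc
      · rw [Nat.mod_eq_of_lt hc] at hm1; omega
      · have hjL : 2*j+1 = L := by omega
        rw [hjL, Nat.mod_self] at hm1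
        -- 2*i = 0, so i = 0
        have hi0 : i = 0 := by omega
        subst hi0
        rw [Nat.mod_eq_of_lt (by omega : 2*0+1 < L)] at hm2
        omega
  set F : Set (Sym2 V) := ↑Ffin with hF
  -- every edge of F joins two distinct leaves
  have hFmem : ∀ ed ∈ F, ∃ i < (L+1)/2, ed = edge i := by
    intro ed hed
    rw [hF, hFfin] at hed
    simp only [Finset.coe_image, Set.mem_image, Finset.mem_coe, Finset.mem_range] at hed
    obtain ⟨i, hi, rfl⟩ := hed
    exact ⟨i, hi, rfl⟩
  have hFleaves : ∀ ed ∈ F, ∃ a b : V, ed = s(a, b) ∧ a ≠ b ∧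
      (T.neighborSet a).ncard = 1 ∧ (T.neighborSet b).ncard = 1 := by
    intro ed hed
    obtain ⟨i, hi, rfl⟩ := hFmem ed hed
    exact ⟨f (2*i), f (2*i+1), rfl, hne i hi, hfS _, hfS _⟩
  -- disjointness
  have hdisj : Disjoint F T.edgeSet := by
    rw [Set.disjoint_left]
    intro ed hed hedT
    obtain ⟨a, b, rfl, hab, ha, hb⟩ := hFleaves ed hed
    exact no_adj_leaves hconn hn ha hb hedT
  -- coverage : every leaf is in some F-edge
  have hcover : ∀ v ∈ S, ∃ w, w ∈ S ∧ w ≠ v ∧ s(v, w) ∈ F := by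
    intro v hv
    obtain ⟨k, hk⟩ := e.surjective ⟨v, hv⟩
    have hkv : f k.1 = v := by
      have hmk : (⟨k.1 % L, Nat.mod_lt _ hLpos⟩ : Fin L) = k := by
        ext; exact Nat.mod_eq_of_lt k.2
      simp only [hf, hmk, hk]
    have hkL : (k : ℕ) < L := k.2
    have hmemF : ∀ i, i < (L+1)/2 → edge i ∈ F := by
      intro i hi
      rw [hF, hFfin]
      simp only [Finset.coe_image, Set.mem_image, Finset.mem_coe, Finset.mem_range]
      exact ⟨i, hi, rfl⟩
    rcases Nat.even_or_odd k.1 with ⟨i, hi⟩ | ⟨i, hi⟩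
    · -- k = 2i, partner f(2i+1)
      have hiR : i < (L+1)/2 := by omega
      have h2i : f (2*i) = v := by rw [← hkv]; congr 1; omega
      refine ⟨f (2*i+1), hfS _, fun h => hne i hiR (by rw [h2i, h]), ?_⟩
      have : s(v, f (2*i+1)) = edge i := by rw [hedge]; rw [← h2i]
      rw [this]; exact hmemF i hiR
    · -- k = 2i+1, partner f(2i)
      have hiR : i < (L+1)/2 := by omega
      have h2i : f (2*i+1) = v := by rw [← hkv]; congr 1; omega
      refine ⟨f (2*i), hfS _, fun h => hne i hiR (by rw [h2i, h]), ?_⟩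
      have : s(v, f (2*i)) = edge i := by rw [hedge, ← h2i, Sym2.eq_swap]
      rw [this]; exact hmemF i hiR
  -- cardinality
  have hcardF : F.ncard = (L + 1) / 2 := by
    rw [hF, Set.ncard_coe_finset, hFfin,
      Finset.card_image_of_injOn (fun a ha b hb h => hinj a ha b hb h),
      Finset.card_range]
  -- union of neighborSets
  have hsupN : ∀ v : V, (T ⊔ SimpleGraph.fromEdgeSet F).neighborSet v =
      T.neighborSet v ∪ (SimpleGraph.fromEdgeSet F).neighborSet v := by
    intro v; ext w
    simp [SimpleGraph.mem_neighborSet, SimpleGraph.sup_adj]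
  refine ⟨F, hcardF, hFleaves, hdisj, ?_⟩
  intro v
  rw [hsupN]
  rcases Classical.em (v ∈ S) with hv | hv
  · -- v is a leaf
    obtain ⟨w, hwS, hwv, hsF⟩ := hcover v hv
    obtain ⟨u, hu⟩ := exists_nbr hconn (by omega) v
    have huS : u ∉ S := fun huS => no_adj_leaves hconn hn hv huS hu
    have huw : u ≠ w := fun h => huS (h ▸ hwS)
    have h2 : 1 < (T.neighborSet v ∪ (SimpleGraph.fromEdgeSet F).neighborSet v).ncard := by
      refine (Set.one_lt_ncard (Set.toFinite _)).mpr ⟨u, Or.inl hu, w, Or.inr ?_, huw⟩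
      rw [SimpleGraph.mem_neighborSet, SimpleGraph.fromEdgeSet_adj]
      exact ⟨hsF, Ne.symm hwv⟩
    omega
  · -- v is not a leaf
    have hpos : 0 < (T.neighborSet v).ncard := by
      rw [Set.ncard_pos (Set.toFinite _)]
      obtain ⟨u, hu⟩ := exists_nbr hconn (by omega) v
      exact ⟨u, hu⟩
    have hne1 : (T.neighborSet v).ncard ≠ 1 := hv
    have h2 : 2 ≤ (T.neighborSet v).ncard := by omega
    exact h2.trans (Set.ncard_le_ncard Set.subset_union_left (Set.toFinite _))
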